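/- Let n ≥ 1 and let W_n' be the n-downlinked mutual dyad. Then over any field, β̃_2(W_n') = n − 1 and β̃_p(W_n') = 0 for all p ≥ 0 with p ≠ 2. -/

import Mathlib

open Finset

/-- The non-regular boundary operator `∂_[p] : R^{V^{p+1}} → R^{V^p}`.
It is the linear map acting on the standard basis by
`∂_[p] e_{(v_0,…,v_p)} = ∑_{j=0}^p (−1)^j e_{(v_0,…,v̂_j,…,v_p)}`,
where `v̂_j` means that the entry `v_j` is omitted from the tuple
(here `fun i => x (j.succAbove i)` is the tuple `x` with its `j`-th entry dropped). -/
noncomputable def pathBoundary (R V : Type) [CommRing R] [Fintype V] [DecidableEq V]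
    (p : ℕ) : ((Fin (p + 1) → V) → R) →ₗ[R] ((Fin p → V) → R) where
  toFun f := fun w => ∑ x : Fin (p + 1) → V,
    (∑ j : Fin (p + 1), (-1 : R) ^ (j : ℕ) *
      (if (fun i => x (j.succAbove i)) = w then 1 else 0)) * f x
  map_add' f g := by
    funext w
    simp [mul_add, Finset.sum_add_distrib]
  map_smul' r f := by
    funext w
    simp [Finset.mul_sum, mul_left_comm]

/-- A tuple of vertices is an allowed path when each consecutive pair is an arc. -/
def IsAllowed {V : Type} (A : V → V → Prop) {q : ℕ} (x : Fin q → V) : Prop :=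
  ∀ (i : ℕ) (h : i + 1 < q), A (x ⟨i, Nat.lt_of_succ_lt h⟩) (x ⟨i + 1, h⟩)

/-- `R^{𝒜}`: the subspace of `R^{V^q}` of functions supported on allowed paths
(`q` is the number of vertices in the tuple, so this is `R^{𝒜_{q-1}}`). -/
def allowedSubmodule (R V : Type) [CommRing R] (A : V → V → Prop) (q : ℕ) :
    Submodule R ((Fin q → V) → R) where
  carrier := {f | ∀ x, ¬ IsAllowed A x → f x = 0}
  add_mem' := fun hf hg x hx => by simp only [Pi.add_apply, hf x hx, hg x hx, add_zero]
  zero_mem' := fun x hx => rfl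
  smul_mem' := fun c f hf x hx => by simp only [Pi.smul_apply, hf x hx, smul_zero]

/-- `Ω_p`, the space of invariant `p`-paths:
`Ω_p = {ω ∈ R^{𝒜_p} : ∂_[p] ω ∈ R^{𝒜_{p−1}}}`. -/
noncomputable def invariantPaths (R V : Type) [CommRing R] [Fintype V] [DecidableEq V]
    (A : V → V → Prop) (p : ℕ) : Submodule R ((Fin (p + 1) → V) → R) :=
  allowedSubmodule R V A (p + 1) ⊓ (allowedSubmodule R V A p).comap (pathBoundary R V p)

/-- The cycles `Z_p = ker ∂_p` of the path complex `(Ω_p, ∂_p)`, `∂_p = ∂_[p]|_{Ω_p}`.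
In degree `0` the complex ends at `Ω_0` (the differential out of `Ω_0` is zero),
so `Z_0 = Ω_0`. -/
noncomputable def pathCycles (R V : Type) [CommRing R] [Fintype V] [DecidableEq V]
    (A : V → V → Prop) : (p : ℕ) → Submodule R ((Fin (p + 1) → V) → R)
  | 0 => invariantPaths R V A 0
  | p + 1 => invariantPaths R V A (p + 1) ⊓ LinearMap.ker (pathBoundary R V (p + 1))

/-- The boundaries `B_p = im ∂_{p+1} = ∂_[p+1](Ω_{p+1})`. -/
noncomputable def pathBoundaries (R V : Type) [CommRing R] [Fintype V] [DecidableEq V]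
    (A : V → V → Prop) (p : ℕ) : Submodule R ((Fin (p + 1) → V) → R) :=
  Submodule.map (pathBoundary R V (p + 1)) (invariantPaths R V A (p + 1))

/-- The path homology `H_p = Z_p / B_p` of the digraph `(V, A)` with coefficients in `R`. -/
abbrev pathHomology (R V : Type) [CommRing R] [Fintype V] [DecidableEq V]
    (A : V → V → Prop) (p : ℕ) : Type :=
  pathCycles R V A p ⧸ (pathBoundaries R V A p).comap (pathCycles R V A p).subtype

/-- The Betti numbers `β_p = dim H_p`. -/
noncomputable def betti (F V : Type) [Field F] [Fintype V] [DecidableEq V]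
    (A : V → V → Prop) (p : ℕ) : ℕ :=
  Module.finrank F (pathHomology F V A p)

/-- The reduced Betti numbers `β̃_p = β_p − δ_{p0}` (as integers). -/
noncomputable def tildeBetti (F V : Type) [Field F] [Fintype V] [DecidableEq V]
    (A : V → V → Prop) (p : ℕ) : ℤ :=
  (betti F V A p : ℤ) - (if p = 0 then 1 else 0)

/-- For `n ≥ 1`, the `n`-uplinked mutual dyad `W_n` has vertex set `{a, b, 1, …, n}`
(realized as `Fin 2 ⊕ Fin n`, with `a = Sum.inl 0` and `b = Sum.inl 1`) and arc set
`{(a,b), (b,a)} ∪ {(a,i) : 1 ≤ i ≤ n} ∪ {(b,i) : 1 ≤ i ≤ n}`. -/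
def uplinkArc (n : ℕ) : (Fin 2 ⊕ Fin n) → (Fin 2 ⊕ Fin n) → Prop
  | Sum.inl i, Sum.inl j => i ≠ j
  | Sum.inl _, Sum.inr _ => True
  | Sum.inr _, _ => False

/-- The `n`-downlinked mutual dyad: the `n`-uplinked mutual dyad with all arcs reversed. -/
def downlinkArc (n : ℕ) (u v : Fin 2 ⊕ Fin n) : Prop := uplinkArc n v u

/-!
Every arc of `W_n'` ends in `{a, b}`, and the only 2-cycle is `a ⇄ b`. An invariant path
therefore cannot run through `a b a` or `b a b`: deleting the middle vertex leaves a loop, so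
that coefficient of the boundary vanishes, and the only vertex that can be reinserted there is
the deleted one. Hence `Ω_p = 0` for `p ≥ 3`, while `Ω_2` is spanned by the `2n` paths `i a b`,
`i b a`, with `∂(α • iab + β • iba) = (∑ α) • ab + (∑ β) • ba + ∑ (α_i - β_i) • (ia - ib)`.
The 2-cycles are `α = β` with `∑ α = 0`, of dimension `n - 1`; every 1-cycle is such a boundary;
and since every vertex is joined to `a`, `β_0 = 1`.
-/

theorem Fin.val_succAbove {p : ℕ} (j : Fin (p + 1)) (k : Fin p) :
    (j.succAbove k : ℕ) = if (k : ℕ) < j then (k : ℕ) else (k : ℕ) + 1 := by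
  unfold Fin.succAbove
  split_ifs <;> simp_all [Fin.lt_def]

section PathComplex

variable {V : Type} {A : V → V → Prop}

theorem IsAllowed.rel {q : ℕ} {x : Fin q → V} (h : IsAllowed A x) {i j : Fin q}
    (hij : (j : ℕ) = i + 1) : A (x i) (x j) := by
  obtain ⟨i, hi⟩ := i
  obtain ⟨j, hj⟩ := j
  simp only at hij
  subst hij
  exact h i hj

theorem isAllowed_of_length_le_one {q : ℕ} (hq : q ≤ 1) (x : Fin q → V) : IsAllowed A x :=
  fun i h => by omega

theorem isAllowed_pair_iff {u v : V} : IsAllowed A ![u, v] ↔ A u v :=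
  ⟨fun h => h.rel (i := 0) (j := 1) rfl, fun h i hi => by
    obtain rfl : i = 0 := (by omega)
    exact h⟩

theorem isAllowed_triple_iff {u v t : V} : IsAllowed A ![u, v, t] ↔ A u v ∧ A v t :=
  ⟨fun h => ⟨h.rel (i := 0) (j := 1) rfl, h.rel (i := 1) (j := 2) rfl⟩, fun h i hi => by
    obtain rfl | rfl : i = 0 ∨ i = 1 := (by omega)
    exacts [h.1, h.2]⟩

variable {R : Type} [CommRing R]

theorem allowedSubmodule_eq_top {q : ℕ} (hq : q ≤ 1) : allowedSubmodule R V A q = ⊤ :=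
  eq_top_iff.2 fun _ _ y hy => absurd (isAllowed_of_length_le_one hq y) hy

theorem single_mem_allowedSubmodule [DecidableEq V] {q : ℕ} {x : Fin q → V} (hx : IsAllowed A x)
    (r : R) : Pi.single x r ∈ allowedSubmodule R V A q := fun y hy => by
  simp [show y ≠ x from fun h => hy (h ▸ hx)]

variable [Fintype V] [DecidableEq V]

theorem pathBoundary_apply (p : ℕ) (f : (Fin (p + 1) → V) → R) (w : Fin p → V) :
    pathBoundary R V p f w =
      ∑ j : Fin (p + 1), (-1 : R) ^ (j : ℕ) * ∑ v : V, f (j.insertNth v w) := by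
  simp only [pathBoundary, LinearMap.coe_mk, AddHom.coe_mk, Finset.sum_mul, mul_assoc]
  rw [Finset.sum_comm]
  refine Finset.sum_congr rfl fun j _ => ?_
  rw [← Finset.mul_sum, ← (Fin.insertNthEquiv (fun _ => V) j).sum_comp, Fintype.sum_prod_type,
    Finset.sum_comm]
  simp [Fin.insertNthEquiv]

theorem pathBoundary_single (p : ℕ) (x : Fin (p + 1) → V) (r : R) :
    pathBoundary R V p (Pi.single x r) =
      ∑ j : Fin (p + 1), (-1 : R) ^ (j : ℕ) • Pi.single (fun i => x (j.succAbove i)) r := by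
  ext w
  simp only [pathBoundary, LinearMap.coe_mk, AddHom.coe_mk]
  rw [Finset.sum_eq_single x (fun y _ hy => by rw [Pi.single_eq_of_ne hy, mul_zero]) (by simp),
    Pi.single_eq_same]
  simp [Finset.sum_apply, Pi.single_apply, Finset.sum_mul, eq_comm]

theorem invariantPaths_zero : invariantPaths R V A 0 = ⊤ := by
  simp [invariantPaths, allowedSubmodule_eq_top]

theorem invariantPaths_one : invariantPaths R V A 1 = allowedSubmodule R V A 2 := by
  simp [invariantPaths, allowedSubmodule_eq_top]

theorem single_mem_invariantPaths_one {u v : V} (h : A u v) (r : R) :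
    Pi.single ![u, v] r ∈ invariantPaths R V A 1 := by
  rw [invariantPaths_one]
  exact single_mem_allowedSubmodule (isAllowed_pair_iff.2 h) r

theorem pathBoundary_single_pair (u v : V) (r : R) :
    pathBoundary R V 1 (Pi.single ![u, v] r) = Pi.single ![v] r - Pi.single ![u] r := by
  have h₀ : (fun i => ![u, v] (Fin.succAbove 0 i)) = ![v] := by funext i; fin_cases i; rfl
  have h₁ : (fun i => ![u, v] (Fin.succAbove 1 i)) = ![u] := by funext i; fin_cases i; rfl
  rw [pathBoundary_single, Fin.sum_univ_two, h₀, h₁]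
  simp [sub_eq_add_neg]

theorem pathBoundary_single_triple (u v t : V) (r : R) :
    pathBoundary R V 2 (Pi.single ![u, v, t] r) =
      Pi.single ![v, t] r - Pi.single ![u, t] r + Pi.single ![u, v] r := by
  have h₀ : (fun i => ![u, v, t] (Fin.succAbove 0 i)) = ![v, t] := by
    funext i; fin_cases i <;> rfl
  have h₁ : (fun i => ![u, v, t] (Fin.succAbove 1 i)) = ![u, t] := by
    funext i; fin_cases i <;> rfl
  have h₂ : (fun i => ![u, v, t] (Fin.succAbove 2 i)) = ![u, v] := by
    funext i; fin_cases i <;> rfl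
  rw [pathBoundary_single, Fin.sum_univ_three, h₀, h₁, h₂]
  simp [sub_eq_add_neg]

theorem pathCycles_le_invariantPaths : ∀ p, pathCycles R V A p ≤ invariantPaths R V A p
  | 0 => le_rfl
  | _ + 1 => inf_le_left

theorem invariantPath_apply_eq_zero_of_backtrack (hA : ∀ v, ¬ A v v) {p : ℕ}
    {ω : (Fin (p + 1) → V) → R} (hω : ω ∈ invariantPaths R V A p) {x : Fin (p + 1) → V} {i j l : Fin (p + 1)}
    (hij : (j : ℕ) = i + 1) (hjl : (l : ℕ) = j + 1) (hil : x i = x l)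
    (huniq : ∀ v, A (x i) v → A v (x i) → v = x j) : ω x = 0 := by
  set w := j.removeNth x
  let i' : Fin p := ⟨i, by omega⟩
  let l' : Fin p := ⟨j, by omega⟩
  have hi' : j.succAbove i' = i := Fin.ext (by simp [Fin.val_succAbove, i', hij])
  have hl' : j.succAbove l' = l := Fin.ext (by simp [Fin.val_succAbove, l', hjl])
  have hwi : w i' = x i := by simp [w, Fin.removeNth, hi']
  have hwl : w l' = x i := by simp [w, Fin.removeNth, hl', hil]
  have hw : ¬ IsAllowed A w := fun h =>
    hA _ (by simpa [hwi, hwl] using h.rel (i := i') (j := l') hij)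
  have hboundary := hω.2 w hw
  rw [pathBoundary_apply, Finset.sum_eq_single j] at hboundary
  · rw [Finset.sum_eq_single (x j), Fin.insertNth_self_removeNth] at hboundary
    · simpa using hboundary
    · intro v _ hv
      refine hω.1 _ fun h => hv (huniq v ?_ ?_)
      · simpa [← hi', Fin.insertNth_apply_succAbove, hwi] using h.rel (i := i) (j := j) hij
      · simpa [← hl', Fin.insertNth_apply_succAbove, hwl] using h.rel (i := j) (j := l) hjl
    · simp
  · intro j' _ hj'
    refine mul_eq_zero_of_right _ (Finset.sum_eq_zero fun v _ => hω.1 _ fun h => hA (x i) ?_)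
    have hcons : (j'.succAbove l' : ℕ) = j'.succAbove i' + 1 := by
      have : (j' : ℕ) ≠ j := fun h => hj' (Fin.ext h)
      simp only [Fin.val_succAbove, i', l']
      split_ifs <;> omega
    simpa [Fin.insertNth_apply_succAbove, hwi, hwl] using h.rel hcons
  · simp

theorem pathBoundaries_zero_eq_ker_sum (a : V) (ha : ∀ v, v ≠ a → A v a ∨ A a v) :
    pathBoundaries R V A 0 = LinearMap.ker (∑ w, LinearMap.proj w) := by
  set σ : ((Fin 1 → V) → R) →ₗ[R] R := ∑ w, LinearMap.proj w
  have hσ : σ ∘ₗ pathBoundary R V 1 = 0 := LinearMap.pi_ext fun x r => by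
    simp [σ, pathBoundary_single, Fin.sum_univ_two, Finset.sum_add_distrib]
  have hedge (v : V) (r : R) : Pi.single ![v] r - Pi.single ![a] r ∈ pathBoundaries R V A 0 := by
    by_cases hv : v = a
    · simp [hv]
    rcases ha v hv with h | h
    · refine ⟨-Pi.single ![v, a] r, ?_, ?_⟩
      · exact neg_mem (single_mem_invariantPaths_one h r)
      · rw [map_neg, pathBoundary_single_pair, neg_sub]
    · exact ⟨_, single_mem_invariantPaths_one h r, pathBoundary_single_pair a v r⟩
  apply le_antisymm
  · rintro _ ⟨ω, -, rfl⟩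
    exact LinearMap.congr_fun hσ ω
  · intro f hf
    have hf' : ∑ w, f w = 0 := by simpa [σ] using hf
    have hdecomp : f = ∑ w, (Pi.single w (f w) - Pi.single ![a] (f w)) := by
      ext x
      simp [Finset.sum_apply, Pi.single_apply, hf']
    rw [hdecomp]
    refine Submodule.sum_mem _ fun w _ => ?_
    obtain ⟨v, rfl⟩ : ∃ v, w = ![v] := ⟨w 0, funext fun i => by fin_cases i; rfl⟩
    exact hedge v _

end PathComplex

theorem finrank_ker_sum_proj {F ι : Type} [Field F] [Fintype ι] [Nonempty ι] :
    Module.finrank F (LinearMap.ker (∑ i, LinearMap.proj i : (ι → F) →ₗ[F] F)) =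
      Fintype.card ι - 1 := by
  classical
  have hsurj : Function.Surjective (∑ i, LinearMap.proj i : (ι → F) →ₗ[F] F) := fun r =>
    ⟨Pi.single (Classical.arbitrary ι) r, by simp⟩
  have := LinearMap.finrank_range_add_finrank_ker (∑ i, LinearMap.proj i : (ι → F) →ₗ[F] F)
  rw [LinearMap.range_eq_top.2 hsurj, finrank_top, Module.finrank_self,
    Module.finrank_fintype_fun_eq_card] at this
  omega

section Betti

variable {F V : Type} [Field F] [Fintype V] [DecidableEq V] {A : V → V → Prop} {p : ℕ}

theorem betti_add_finrank_pathBoundaries (h : pathBoundaries F V A p ≤ pathCycles F V A p) :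
    betti F V A p + Module.finrank F (pathBoundaries F V A p) =
      Module.finrank F (pathCycles F V A p) := by
  rw [betti, ← LinearEquiv.finrank_eq (Submodule.comapSubtypeEquivOfLe h)]
  exact Submodule.finrank_quotient_add_finrank _

theorem betti_eq_zero_of_pathCycles_le (h : pathCycles F V A p ≤ pathBoundaries F V A p) :
    betti F V A p = 0 := by
  have : Subsingleton (pathHomology F V A p) := by
    rw [Submodule.Quotient.subsingleton_iff, Submodule.comap_subtype_eq_top]
    exact h
  exact Module.finrank_zero_of_subsingleton

theorem betti_zero_eq_one_of_forall_adj (a : V) (ha : ∀ v, v ≠ a → A v a ∨ A a v) :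
    betti F V A 0 = 1 := by
  have hZ : pathCycles F V A 0 = ⊤ := invariantPaths_zero
  have : Nonempty (Fin 1 → V) := ⟨![a]⟩
  have hcard : 0 < Fintype.card (Fin (0 + 1) → V) := Fintype.card_pos
  have h := betti_add_finrank_pathBoundaries (hZ ▸ le_top : pathBoundaries F V A 0 ≤ _)
  rw [hZ, finrank_top, pathBoundaries_zero_eq_ker_sum a ha, finrank_ker_sum_proj,
    Module.finrank_fintype_fun_eq_card] at h
  omega

end Betti

section Dyad

variable {n : ℕ}

@[simp] theorem downlinkArc_inl_inl {c d : Fin 2} :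
    downlinkArc n (.inl c) (.inl d) ↔ c ≠ d := ne_comm

@[simp] theorem downlinkArc_inr_inl (i : Fin n) (c : Fin 2) : downlinkArc n (.inr i) (.inl c) :=
  trivial

@[simp] theorem not_downlinkArc_inr (u : Fin 2 ⊕ Fin n) (i : Fin n) :
    ¬ downlinkArc n u (.inr i) := by
  rcases u with _ | _ <;> exact id

theorem downlinkArc_irrefl (v : Fin 2 ⊕ Fin n) : ¬ downlinkArc n v v := by
  rcases v with c | i <;> simp

theorem downlinkArc_inl_zero_of_ne {v : Fin 2 ⊕ Fin n} (hv : v ≠ .inl 0) :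
    downlinkArc n v (.inl 0) := by
  rcases v with c | i
  · fin_cases c <;> simp_all
  · simp

theorem downlinkArc_walk_three {u v w t : Fin 2 ⊕ Fin n} (huv : downlinkArc n u v)
    (hvw : downlinkArc n v w) (hwt : downlinkArc n w t) : t = v := by
  rcases v with c | _ <;> rcases w with d | _ <;> rcases t with e | _ <;> simp_all
  omega

theorem downlinkArc_two_cycle_unique {u v w : Fin 2 ⊕ Fin n} (huv : downlinkArc n u v)
    (hvu : downlinkArc n v u) (huw : downlinkArc n u w) (hwu : downlinkArc n w u) : v = w := by
  rcases u with c | _ <;> rcases v with d | _ <;> rcases w with e | _ <;> simp_all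
  omega

variable {R : Type} [CommRing R]

noncomputable def dyadOneChain (s t : R) (α β : Fin n → R) :
    (Fin 2 → Fin 2 ⊕ Fin n) → R :=
  s • Pi.single ![.inl 0, .inl 1] 1 + t • Pi.single ![.inl 1, .inl 0] 1 +
    ∑ i, (α i • Pi.single ![.inr i, .inl 0] 1 + β i • Pi.single ![.inr i, .inl 1] 1)

noncomputable def dyadTwoChain (α β : Fin n → R) : (Fin 3 → Fin 2 ⊕ Fin n) → R :=
  ∑ i, (α i • Pi.single ![.inr i, .inl 0, .inl 1] 1 +
    β i • Pi.single ![.inr i, .inl 1, .inl 0] 1)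

theorem dyadOneChain_apply_ab (s t : R) (α β : Fin n → R) :
    dyadOneChain s t α β ![.inl 0, .inl 1] = s := by
  simp [dyadOneChain, Finset.sum_apply]

theorem dyadOneChain_apply_ia (s t : R) (α β : Fin n → R) (i : Fin n) :
    dyadOneChain s t α β ![.inr i, .inl 0] = α i := by
  simp [dyadOneChain, Finset.sum_apply, Pi.single_apply]

theorem dyadTwoChain_apply_iab (α β : Fin n → R) (i : Fin n) :
    dyadTwoChain α β ![.inr i, .inl 0, .inl 1] = α i := by
  simp [dyadTwoChain, Finset.sum_apply, Pi.single_apply]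

theorem pathBoundary_dyadOneChain_apply_a (s t : R) (α β : Fin n → R) :
    pathBoundary R _ 1 (dyadOneChain s t α β) ![.inl 0] = t - s + ∑ i, α i := by
  simp [dyadOneChain, pathBoundary_single_pair, Finset.sum_apply]
  ring

theorem pathBoundary_dyadOneChain_apply_i (s t : R) (α β : Fin n → R) (i : Fin n) :
    pathBoundary R _ 1 (dyadOneChain s t α β) ![.inr i] = -(α i + β i) := by
  simp [dyadOneChain, pathBoundary_single_pair, Finset.sum_apply, Pi.single_apply,
    Finset.sum_add_distrib]
  ring

theorem pathBoundary_dyadTwoChain (α β : Fin n → R) :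
    pathBoundary R _ 2 (dyadTwoChain α β) =
      dyadOneChain (∑ i, α i) (∑ i, β i) (α - β) (β - α) := by
  simp only [dyadTwoChain, dyadOneChain, map_sum, map_add, map_smul, pathBoundary_single_triple,
    Finset.sum_smul, ← Finset.sum_add_distrib, Pi.sub_apply]
  refine Finset.sum_congr rfl fun i _ => ?_
  module

theorem dyadOneChain_mem_allowedSubmodule (s t : R) (α β : Fin n → R) :
    dyadOneChain s t α β ∈ allowedSubmodule R _ (downlinkArc n) 2 := by
  have hmem {u v : Fin 2 ⊕ Fin n} (h : downlinkArc n u v) (r : R) :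
      r • Pi.single ![u, v] 1 ∈ allowedSubmodule R _ (downlinkArc n) 2 :=
    Submodule.smul_mem _ r (single_mem_allowedSubmodule (isAllowed_pair_iff.2 h) 1)
  exact add_mem (add_mem (hmem (by simp) s) (hmem (by simp) t))
    (Submodule.sum_mem _ fun i _ => add_mem (hmem (by simp) (α i)) (hmem (by simp) (β i)))

theorem dyadTwoChain_mem_invariantPaths (α β : Fin n → R) :
    dyadTwoChain α β ∈ invariantPaths R _ (downlinkArc n) 2 := by
  have hmem {u v w : Fin 2 ⊕ Fin n} (h : downlinkArc n u v ∧ downlinkArc n v w) (r : R) :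
      r • Pi.single ![u, v, w] 1 ∈ allowedSubmodule R _ (downlinkArc n) 3 :=
    Submodule.smul_mem _ r (single_mem_allowedSubmodule (isAllowed_triple_iff.2 h) 1)
  refine ⟨Submodule.sum_mem _ fun i _ => add_mem (hmem (by simp) (α i)) (hmem (by simp) (β i)),
    Submodule.mem_comap.2 ?_⟩
  rw [pathBoundary_dyadTwoChain]
  exact dyadOneChain_mem_allowedSubmodule _ _ _ _

theorem eq_dyadOneChain {ω : (Fin 2 → Fin 2 ⊕ Fin n) → R}
    (hω : ω ∈ allowedSubmodule R _ (downlinkArc n) 2) :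
    ω = dyadOneChain (ω ![.inl 0, .inl 1]) (ω ![.inl 1, .inl 0])
      (fun i => ω ![.inr i, .inl 0]) (fun i => ω ![.inr i, .inl 1]) := by
  ext x
  obtain ⟨u, v, rfl⟩ : ∃ u v, x = ![u, v] := ⟨x 0, x 1, by ext i; fin_cases i <;> rfl⟩
  have hzero (h : ¬ downlinkArc n u v) : ω ![u, v] = 0 := hω _ (isAllowed_pair_iff.not.2 h)
  rcases u with c | i <;> rcases v with d | j <;> (try fin_cases c) <;> (try fin_cases d)
  all_goals simp_all [dyadOneChain, Finset.sum_apply, Pi.single_apply]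

theorem eq_dyadTwoChain {ω : (Fin 3 → Fin 2 ⊕ Fin n) → R}
    (hω : ω ∈ invariantPaths R _ (downlinkArc n) 2) :
    ω = dyadTwoChain (fun i => ω ![.inr i, .inl 0, .inl 1])
      (fun i => ω ![.inr i, .inl 1, .inl 0]) := by
  ext x
  obtain ⟨u, v, w, rfl⟩ : ∃ u v w, x = ![u, v, w] :=
    ⟨x 0, x 1, x 2, by ext i; fin_cases i <;> rfl⟩
  have hzero (h : ¬ (downlinkArc n u v ∧ downlinkArc n v w)) : ω ![u, v, w] = 0 :=
    hω.1 _ (isAllowed_triple_iff.not.2 h)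
  have hback {c d : Fin 2} (hcd : c ≠ d) : ω ![.inl c, .inl d, .inl c] = 0 :=
    invariantPath_apply_eq_zero_of_backtrack downlinkArc_irrefl hω (i := 0) (j := 1) (l := 2)
      rfl rfl rfl fun _ h₁ h₂ =>
        downlinkArc_two_cycle_unique h₁ h₂ (by simpa using hcd) (by simpa using hcd.symm)
  rcases u with c | i <;> rcases v with d | j <;> rcases w with e | k <;>
    (try fin_cases c) <;> (try fin_cases d) <;> (try fin_cases e)
  all_goals simp_all [dyadTwoChain, Finset.sum_apply, Pi.single_apply]

theorem dyad_invariantPaths_eq_bot {p : ℕ} (hp : 3 ≤ p) :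
    invariantPaths R (Fin 2 ⊕ Fin n) (downlinkArc n) p = ⊥ := by
  refine (Submodule.eq_bot_iff _).2 fun ω hω => funext fun x => ?_
  by_cases hx : IsAllowed (downlinkArc n) x
  · have h₀₁ := hx.rel (i := ⟨0, by omega⟩) (j := ⟨1, by omega⟩) rfl
    have h₁₂ := hx.rel (i := ⟨1, by omega⟩) (j := ⟨2, by omega⟩) rfl
    have h₂₃ := hx.rel (i := ⟨2, by omega⟩) (j := ⟨3, by omega⟩) rfl
    have h₃₁ := downlinkArc_walk_three h₀₁ h₁₂ h₂₃
    exact invariantPath_apply_eq_zero_of_backtrack downlinkArc_irrefl hω (i := ⟨1, by omega⟩)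
      rfl rfl h₃₁.symm fun _ h h' => downlinkArc_two_cycle_unique h h' h₁₂ (h₃₁ ▸ h₂₃)
  · exact hω.1 x hx

theorem dyad_pathCycles_one_le (hn : 1 ≤ n) :
    pathCycles R _ (downlinkArc n) 1 ≤ pathBoundaries R _ (downlinkArc n) 1 := by
  rintro ω ⟨hΩ, hker⟩
  rw [invariantPaths_one] at hΩ
  have hω := eq_dyadOneChain hΩ
  set s := ω ![.inl 0, .inl 1]
  set t := ω ![.inl 1, .inl 0]
  set α : Fin n → R := fun i => ω ![.inr i, .inl 0]
  set β : Fin n → R := fun i => ω ![.inr i, .inl 1]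
  have hβ : β = -α := funext fun i => by
    have := congr_fun (LinearMap.mem_ker.1 hker) ![.inr i]
    rw [hω, pathBoundary_dyadOneChain_apply_i] at this
    simp only [Pi.zero_apply, Pi.neg_apply] at this ⊢
    linear_combination -this
  have hs : s = t + ∑ i, α i := by
    have := congr_fun (LinearMap.mem_ker.1 hker) ![.inl 0]
    rw [hω, pathBoundary_dyadOneChain_apply_a, Pi.zero_apply] at this
    linear_combination -this
  set γ : Fin n → R := Pi.single ⟨0, hn⟩ t
  refine ⟨dyadTwoChain (α + γ) γ, dyadTwoChain_mem_invariantPaths _ _, ?_⟩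
  rw [pathBoundary_dyadTwoChain, hω, hβ, hs]
  congr 1 <;> simp [γ, Finset.sum_add_distrib, add_comm]

theorem mem_dyad_pathCycles_two {ω : (Fin 3 → Fin 2 ⊕ Fin n) → R} :
    ω ∈ pathCycles R _ (downlinkArc n) 2 ↔
      ∃ c : Fin n → R, ∑ i, c i = 0 ∧ dyadTwoChain c c = ω := by
  constructor
  · rintro ⟨hΩ, hker⟩
    have hω := eq_dyadTwoChain hΩ
    set α : Fin n → R := fun i => ω ![.inr i, .inl 0, .inl 1]
    set β : Fin n → R := fun i => ω ![.inr i, .inl 1, .inl 0]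
    have hbd := LinearMap.mem_ker.1 hker
    rw [hω, pathBoundary_dyadTwoChain] at hbd
    have hαβ : α = β := funext fun i => by
      simpa [dyadOneChain_apply_ia, sub_eq_zero] using congr_fun hbd ![.inr i, .inl 0]
    refine ⟨α, by simpa [dyadOneChain_apply_ab] using congr_fun hbd ![.inl 0, .inl 1], ?_⟩
    rw [hω, hαβ]
  · rintro ⟨c, hc, rfl⟩
    refine ⟨dyadTwoChain_mem_invariantPaths c c, LinearMap.mem_ker.2 ?_⟩
    rw [pathBoundary_dyadTwoChain, hc, sub_self]
    simp [dyadOneChain]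

variable {F : Type} [Field F]

theorem finrank_dyad_pathCycles_two (hn : 1 ≤ n) :
    Module.finrank F (pathCycles F _ (downlinkArc n) 2) = n - 1 := by
  let L := Fintype.linearCombination F fun i : Fin n =>
    (Pi.single ![.inr i, .inl 0, .inl 1] 1 + Pi.single ![.inr i, .inl 1, .inl 0] 1 :
      (Fin 3 → Fin 2 ⊕ Fin n) → F)
  have hL (c : Fin n → F) : L c = dyadTwoChain c c := by
    simp [L, Fintype.linearCombination_apply, dyadTwoChain, smul_add]
  have hinj : Function.Injective L := fun c d h => funext fun i => by
    simpa [hL, dyadTwoChain_apply_iab] using congr_fun h ![.inr i, .inl 0, .inl 1]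
  have hZ : pathCycles F _ (downlinkArc n) 2 = (LinearMap.ker (∑ i, LinearMap.proj i)).map L := by
    ext ω
    simp [mem_dyad_pathCycles_two, hL]
  have : Nonempty (Fin n) := ⟨⟨0, hn⟩⟩
  rw [hZ, ← (Submodule.equivMapOfInjective L hinj _).finrank_eq, finrank_ker_sum_proj,
    Fintype.card_fin]

theorem dyad_betti_two (hn : 1 ≤ n) : betti F _ (downlinkArc n) 2 = n - 1 := by
  have hB : pathBoundaries F _ (downlinkArc n) 2 = ⊥ := by
    rw [pathBoundaries, dyad_invariantPaths_eq_bot le_rfl, Submodule.map_bot]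
  have := betti_add_finrank_pathBoundaries (hB ▸ bot_le)
  rwa [hB, finrank_bot, add_zero, finrank_dyad_pathCycles_two hn] at this

theorem dyad_betti_of_three_le {p : ℕ} (hp : 3 ≤ p) : betti F _ (downlinkArc n) p = 0 :=
  betti_eq_zero_of_pathCycles_le <| (pathCycles_le_invariantPaths p).trans <|
    (dyad_invariantPaths_eq_bot hp).trans_le bot_le

end Dyad

/-- For `n ≥ 1` and `W_n'` the `n`-downlinked mutual dyad, over any field
`β̃_2(W_n') = n − 1` and `β̃_p(W_n') = 0` for all `p ≥ 0` with `p ≠ 2`. -/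
theorem downlinked_dyad_tildeBetti (F : Type) [Field F] (n : ℕ) (hn : 1 ≤ n) :
    tildeBetti F (Fin 2 ⊕ Fin n) (downlinkArc n) 2 = (n : ℤ) - 1
    ∧ ∀ p : ℕ, p ≠ 2 → tildeBetti F (Fin 2 ⊕ Fin n) (downlinkArc n) p = 0 := by
  refine ⟨by simp [tildeBetti, dyad_betti_two hn, Nat.cast_sub hn], fun p hp => ?_⟩
  rcases p with _ | _ | _ | p
  · simp [tildeBetti,
      betti_zero_eq_one_of_forall_adj _ fun v hv => Or.inl (downlinkArc_inl_zero_of_ne hv)]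
  · simp [tildeBetti, betti_eq_zero_of_pathCycles_le (dyad_pathCycles_one_le hn)]
  · exact absurd rfl hp
  · simp [tildeBetti, dyad_betti_of_three_le (p := p + 3) (by omega)]
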